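/- arXiv:1206.0045 — 4 statements merged into one kernel-verified Lean document; each statement's English description precedes it below -/
import Mathlib

section
/- Let u : [0, ∞) → ℝ be continuous and let c > 0. Then limsup_{s → ∞} ( u(s) + c ∫₀ˢ u(t)² dt ) ≥ 0. -/
open Filter Set

/-! If the limsup were below some `r < 0`, then eventually `u < -f` with `f = c ∫₀ˢ u² - r > 0`,
hence `f' = c u² ≥ c f²`. Such a Riccati supersolution blows up in finite time: `1 / f` decreases
at rate at least `c` while staying positive. -/

theorem hasDerivAt_integral_of_continuousOn_Ici {g : ℝ → ℝ} {a x : ℝ}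
    (hg : ContinuousOn g (Ici a)) (hx : a < x) :
    HasDerivAt (fun s => ∫ t in a..s, g t) (g x) x :=
  intervalIntegral.integral_hasDerivAt_right
    ((hg.mono (uIcc_of_le hx.le ▸ Icc_subset_Ici_self)).intervalIntegrable)
    ((hg.mono Ioi_subset_Ici_self).stronglyMeasurableAtFilter isOpen_Ioi x hx)
    (hg.continuousAt (Ici_mem_nhds hx))

theorem antitoneOn_inv_add_mul_of_mul_sq_le_deriv {f f' : ℝ → ℝ} {a c : ℝ}
    (hf : ∀ x ≥ a, HasDerivAt f (f' x) x) (hf' : ∀ x ≥ a, c * f x ^ 2 ≤ f' x)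
    (hpos : ∀ x ≥ a, 0 < f x) :
    AntitoneOn (fun x => (f x)⁻¹ + c * x) (Ici a) := by
  have hderiv : ∀ x ≥ a, HasDerivAt (fun x => (f x)⁻¹ + c * x) (-f' x / f x ^ 2 + c) x :=
    fun x hx => ((hf x hx).inv (hpos x hx).ne').add (by simpa using (hasDerivAt_id x).const_mul c)
  refine antitoneOn_of_hasDerivWithinAt_nonpos (convex_Ici a)
    (fun x hx => (hderiv x hx).continuousAt.continuousWithinAt)
    (fun x hx => (hderiv x (interior_subset hx)).hasDerivWithinAt) fun x hx => ?_
  have hx : a ≤ x := interior_subset hx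
  have hf2 : 0 < f x ^ 2 := pow_pos (hpos x hx) 2
  have : c ≤ f' x / f x ^ 2 := (le_div_iff₀ hf2).2 (hf' x hx)
  rw [neg_div]
  linarith

theorem exists_nonpos_of_mul_sq_le_deriv {f f' : ℝ → ℝ} {a c : ℝ} (hc : 0 < c)
    (hf : ∀ x ≥ a, HasDerivAt f (f' x) x) (hf' : ∀ x ≥ a, c * f x ^ 2 ≤ f' x) :
    ∃ x ≥ a, f x ≤ 0 := by
  by_contra! hpos
  have hfa := hpos a le_rfl
  set b := a + (f a)⁻¹ / c
  have hab : a ≤ b := le_add_of_nonneg_right (by positivity)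
  have hanti := antitoneOn_inv_add_mul_of_mul_sq_le_deriv hf hf' hpos
    self_mem_Ici (mem_Ici.2 hab) hab
  have hcb : c * b = c * a + (f a)⁻¹ := by
    simp only [b]
    field_simp
  have hfb := inv_pos.2 (hpos b hab)
  simp only [hcb] at hanti
  linarith

/-- Guimaraes' lemma (limsup part): for `u` continuous on `[0, ∞)` and `c > 0`,
`limsup_{s → ∞} (u s + c ∫₀ˢ u t ^ 2 dt) ≥ 0`, the limsup taken in the extended reals. -/
theorem guimaraes_limsup_nonneg (u : ℝ → ℝ) (hu : ContinuousOn u (Set.Ici 0))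
    (c : ℝ) (hc : 0 < c) :
    (0 : EReal) ≤
      Filter.limsup (fun s : ℝ => ((u s + c * ∫ t in (0:ℝ)..s, u t ^ 2 : ℝ) : EReal))
        Filter.atTop := by
  by_contra! hneg
  obtain ⟨r, hlim, hr0⟩ := EReal.exists_between_coe_real hneg
  have hr : r < 0 := EReal.coe_lt_coe_iff.1 hr0
  obtain ⟨a, ha⟩ := eventually_atTop.1 (eventually_lt_of_limsup_lt hlim)
  set F : ℝ → ℝ := fun s => ∫ t in (0:ℝ)..s, u t ^ 2
  have hpos : ∀ s ≥ 0, 0 < c * F s - r := fun s hs => by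
    have : 0 ≤ c * F s :=
      mul_nonneg hc.le (intervalIntegral.integral_nonneg hs fun t _ => sq_nonneg (u t))
    linarith
  have hderiv : ∀ s ≥ max a 1, HasDerivAt (fun s => c * F s - r) (c * u s ^ 2) s :=
    fun s hs => ((hasDerivAt_integral_of_continuousOn_Ici (hu.pow 2)
      (one_pos.trans_le (le_of_max_le_right hs))).const_mul c).sub_const r
  have hriccati : ∀ s ≥ max a 1, c * (c * F s - r) ^ 2 ≤ c * u s ^ 2 := fun s hs => by
    have hus : u s + c * F s < r := EReal.coe_lt_coe_iff.1 (ha s (le_of_max_le_left hs))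
    have hfs := hpos s (zero_le_one.trans (le_of_max_le_right hs))
    have hsq : (c * F s - r) ^ 2 ≤ u s ^ 2 := by nlinarith
    exact mul_le_mul_of_nonneg_left hsq hc.le
  obtain ⟨x, hx, hfx⟩ := exists_nonpos_of_mul_sq_le_deriv hc hderiv hriccati
  exact (hpos x (zero_le_one.trans (le_of_max_le_right hx))).not_ge hfx
end

section
/- Let u : [0, ∞) → ℝ be continuous and let c > 0. If limsup_{s → ∞} ( u(s) + c ∫₀ˢ u(t)² dt ) = 0, then u is identically zero on [0, ∞). -/
/-!
If `u(t₀) ≠ 0` then `I(s) = ∫₀ˢ u²` is positive from some time `b` on. Once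
`u + c I < c I(b) / 2`, the function `K = c I - c I(b) / 2` is positive and `u < -K`, so
`K' = c u² ≥ c K²`. A positive supersolution of this Riccati equation blows up in finite time,
which is absurd for a function defined on all of `[0, ∞)`.
-/

open Filter MeasureTheory Set

theorem exists_nonpos_of_mul_sq_le_deriv_s1 {K K' : ℝ → ℝ} {c S : ℝ} (hc : 0 < c)
    (hK : ∀ s ≥ S, HasDerivAt K (K' s) s) (hK' : ∀ s ≥ S, c * K s ^ 2 ≤ K' s) :
    ∃ s ≥ S, K s ≤ 0 := by
  by_contra! hpos
  -- `(1 / K)' ≤ -c`, so `1 / K` would vanish by time `S + 1 / (c K(S))`.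
  have hanti : AntitoneOn (fun s => (K s)⁻¹ + c * s) (Ici S) := by
    have hderiv : ∀ s ≥ S, HasDerivAt (fun s => (K s)⁻¹ + c * s) (-K' s / K s ^ 2 + c) s :=
      fun s hs => ((hK s hs).inv (hpos s hs).ne').add
        (((hasDerivAt_id s).const_mul c).congr_deriv (mul_one c))
    refine antitoneOn_of_hasDerivWithinAt_nonpos (convex_Ici S)
      (fun s hs => (hderiv s hs).continuousAt.continuousWithinAt)
      (fun s hs => (hderiv s (interior_subset hs)).hasDerivWithinAt) fun s hs => ?_
    have hs : S ≤ s := interior_subset hs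
    have hK2 : 0 < K s ^ 2 := pow_pos (hpos s hs) 2
    rw [neg_div, neg_add_nonpos_iff, le_div_iff₀ hK2]
    exact hK' s hs
  set T := S + (c * K S)⁻¹
  have hST : S ≤ T := le_add_of_nonneg_right (inv_pos.2 (mul_pos hc (hpos S le_rfl))).le
  have key := hanti self_mem_Ici hST hST
  have hcT : c * T = c * S + (K S)⁻¹ := by
    simp only [T, mul_add, mul_inv, ← mul_assoc, mul_inv_cancel₀ hc.ne', one_mul]
  have hKT : (K T)⁻¹ ≤ 0 := by simp only at key; linarith
  exact (inv_pos.2 (hpos T hST)).not_ge hKT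

theorem ContinuousOn.hasDerivAt_intervalIntegral_of_Ici {E : Type*} [NormedAddCommGroup E]
    [NormedSpace ℝ E] [CompleteSpace E] {f : ℝ → E} {a s : ℝ} (hf : ContinuousOn f (Ici a))
    (hs : a < s) : HasDerivAt (fun x => ∫ t in a..x, f t) (f s) s :=
  intervalIntegral.integral_hasDerivAt_right
    ((hf.mono fun _ hx => (uIcc_of_le hs.le ▸ hx).1).intervalIntegrable)
    ((hf.mono Ioi_subset_Ici_self).stronglyMeasurableAtFilter isOpen_Ioi s hs)
    (hf.continuousAt (Ici_mem_nhds hs))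

section IntegralSq

variable {u : ℝ → ℝ}

theorem intervalIntegral_sq_le_of_le (hu : ContinuousOn u (Ici 0)) {b s : ℝ} (hb : 0 ≤ b)
    (hbs : b ≤ s) : ∫ t in 0..b, u t ^ 2 ≤ ∫ t in 0..s, u t ^ 2 :=
  intervalIntegral.integral_mono_interval le_rfl hb hbs
    (Eventually.of_forall fun _ => sq_nonneg _)
    ((hu.pow 2).mono fun _ hx => (uIcc_of_le (hb.trans hbs) ▸ hx).1).intervalIntegrable

theorem exists_intervalIntegral_sq_pos (hu : ContinuousOn u (Ici 0)) {t₀ : ℝ} (ht₀ : 0 ≤ t₀)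
    (hne : u t₀ ≠ 0) : ∃ b > 0, 0 < ∫ t in 0..b, u t ^ 2 := by
  have hb : (0 : ℝ) < t₀ + 1 := by linarith
  exact ⟨t₀ + 1, hb, intervalIntegral.integral_pos hb ((hu.pow 2).mono Icc_subset_Ici_self)
    (fun _ _ => sq_nonneg _) ⟨t₀, ⟨ht₀, by linarith⟩, by positivity⟩⟩

theorem not_eventually_add_mul_intervalIntegral_sq_lt (hu : ContinuousOn u (Ici 0)) {c b : ℝ}
    (hc : 0 < c) (hb : 0 < b) (hIb : 0 < ∫ t in 0..b, u t ^ 2) :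
    ¬ ∀ᶠ s in atTop, u s + c * ∫ t in 0..s, u t ^ 2 < c * (∫ t in 0..b, u t ^ 2) / 2 := by
  intro h
  obtain ⟨S, hS⟩ := (h.and (eventually_ge_atTop b)).exists_forall_of_atTop
  set K := fun s => c * (∫ t in 0..s, u t ^ 2) - c * (∫ t in 0..b, u t ^ 2) / 2
  have hK_pos : ∀ s ≥ S, 0 < K s := fun s hs => by
    have hI := intervalIntegral_sq_le_of_le hu hb.le (hS s hs).2
    have := mul_le_mul_of_nonneg_left hI hc.le
    have := mul_pos hc hIb
    simp only [K]
    linarith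
  have hK_lt : ∀ s ≥ S, K s < -u s := fun s hs => by
    have := (hS s hs).1
    simp only [K]
    linarith
  have hK_deriv : ∀ s ≥ S, HasDerivAt K (c * u s ^ 2) s := fun s hs =>
    (((hu.pow 2).hasDerivAt_intervalIntegral_of_Ici (hb.trans_le (hS s hs).2)).const_mul
      c).sub_const _
  have hK_riccati : ∀ s ≥ S, c * K s ^ 2 ≤ c * u s ^ 2 := fun s hs => by
    have := pow_le_pow_left₀ (hK_pos s hs).le (hK_lt s hs).le 2
    rw [neg_sq] at this
    exact mul_le_mul_of_nonneg_left this hc.le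
  obtain ⟨s, hs, hKs⟩ := exists_nonpos_of_mul_sq_le_deriv_s1 hc hK_deriv hK_riccati
  exact (hK_pos s hs).not_ge hKs

end IntegralSq

/-- Equality case of Guimaraes' lemma: if the limsup (in the extended reals) of
`s ↦ u s + c ∫₀ˢ u t ^ 2 dt` is `0`, then `u ≡ 0` on `[0, ∞)`. -/
theorem guimaraes_limsup_eq_zero (u : ℝ → ℝ) (hu : ContinuousOn u (Set.Ici 0))
    (c : ℝ) (hc : 0 < c)
    (h : Filter.limsup (fun s : ℝ => ((u s + c * ∫ t in (0:ℝ)..s, u t ^ 2 : ℝ) : EReal))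
        Filter.atTop = 0) :
    ∀ t ∈ Set.Ici (0:ℝ), u t = 0 := by
  intro t₀ ht₀
  by_contra hne
  obtain ⟨b, hb, hIb⟩ := exists_intervalIntegral_sq_pos hu ht₀ hne
  have hlt : limsup (fun s : ℝ => ((u s + c * ∫ t in (0:ℝ)..s, u t ^ 2 : ℝ) : EReal)) atTop <
      ((c * (∫ t in (0:ℝ)..b, u t ^ 2) / 2 : ℝ) : EReal) := by
    rw [h, EReal.coe_pos]
    positivity
  refine not_eventually_add_mul_intervalIntegral_sq_lt hu hc hb hIb ?_
  filter_upwards [eventually_lt_of_limsup_lt hlt] with s hs using EReal.coe_lt_coe_iff.1 hs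
end

section
/- Let n ≥ 3 be an integer and let θ : [0, ∞) → ℝ be a continuously differentiable function satisfying the Raychaudhuri-type inequality θ'(t) + θ(t)²/(n−2) ≤ 0 for all t ≥ 0, with θ(0) ≤ 0. Then θ is identically zero on [0, ∞). -/
/-!
With `c = n - 2 > 0` we have `θ' ≤ -θ²/c ≤ 0`, so `θ` is antitone and stays `≤ 0`. If it ever became
negative, `1/θ - t/c` would be nondecreasing from then on, forcing `1/θ` to reach `0` in finite
time: a negative solution of `θ' ≤ -θ²/c` blows up to `-∞` within time `c/|θ|`.
-/

open Set

theorem monotoneOn_of_hasDerivAt_nonneg {D : Set ℝ} (hD : Convex ℝ D) {f f' : ℝ → ℝ}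
    (hf : ∀ x ∈ D, HasDerivAt f (f' x) x) (hf' : ∀ x ∈ D, 0 ≤ f' x) : MonotoneOn f D :=
  monotoneOn_of_hasDerivWithinAt_nonneg hD (fun x hx => (hf x hx).continuousAt.continuousWithinAt)
    (fun x hx => (hf x (interior_subset hx)).hasDerivWithinAt)
    (fun x hx => hf' x (interior_subset hx))

theorem antitoneOn_of_hasDerivAt_nonpos {D : Set ℝ} (hD : Convex ℝ D) {f f' : ℝ → ℝ}
    (hf : ∀ x ∈ D, HasDerivAt f (f' x) x) (hf' : ∀ x ∈ D, f' x ≤ 0) : AntitoneOn f D :=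
  antitoneOn_of_hasDerivWithinAt_nonpos hD (fun x hx => (hf x hx).continuousAt.continuousWithinAt)
    (fun x hx => (hf x (interior_subset hx)).hasDerivWithinAt)
    (fun x hx => hf' x (interior_subset hx))

section Riccati

variable {f f' : ℝ → ℝ} {a c : ℝ}

theorem inv_add_sub_div_le_inv_of_riccati (hf : ∀ t ∈ Ici a, HasDerivAt f (f' t) t)
    (hric : ∀ t ∈ Ici a, f' t + f t ^ 2 / c ≤ 0) (hneg : ∀ t ∈ Ici a, f t < 0)
    {t : ℝ} (ht : a ≤ t) :
    (f a)⁻¹ + (t - a) / c ≤ (f t)⁻¹ := by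
  have hmono : MonotoneOn (fun s => (f s)⁻¹ - s / c) (Ici a) := by
    refine monotoneOn_of_hasDerivAt_nonneg (convex_Ici a)
      (fun s hs => ((hf s hs).inv (hneg s hs).ne).sub ((hasDerivAt_id s).div_const c)) ?_
    intro s hs
    have hsq : 0 < f s ^ 2 := sq_pos_of_neg (hneg s hs)
    have key : f s ^ 2 / c / f s ^ 2 ≤ -f' s / f s ^ 2 :=
      div_le_div_of_nonneg_right (by linarith [hric s hs]) hsq.le
    rw [div_div_cancel_left' hsq.ne'] at key
    simp only [one_div, neg_div] at key ⊢
    linarith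
  have hg : (f a)⁻¹ - a / c ≤ (f t)⁻¹ - t / c := hmono self_mem_Ici (mem_Ici.mpr ht) ht
  rw [sub_div]
  linarith

theorem exists_nonneg_of_riccati (hc : 0 < c) (hf : ∀ t ∈ Ici a, HasDerivAt f (f' t) t)
    (hric : ∀ t ∈ Ici a, f' t + f t ^ 2 / c ≤ 0) : ∃ t ∈ Ici a, 0 ≤ f t := by
  by_contra! hneg
  -- the time at which the lower bound on `(f t)⁻¹` reaches `0`
  set T := a - c * (f a)⁻¹
  have haT : a ≤ T := by
    have : (f a)⁻¹ < 0 := inv_lt_zero.mpr (hneg a self_mem_Ici)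
    nlinarith
  have hbound := inv_add_sub_div_le_inv_of_riccati hf hric hneg haT
  have hT : (f a)⁻¹ + (T - a) / c = 0 := by
    simp only [T]
    field_simp
    ring
  have : (f T)⁻¹ < 0 := inv_lt_zero.mpr (hneg T haT)
  linarith

theorem eqOn_zero_of_riccati (hc : 0 < c) (hf : ∀ t ∈ Ici a, HasDerivAt f (f' t) t)
    (hric : ∀ t ∈ Ici a, f' t + f t ^ 2 / c ≤ 0) (ha : f a ≤ 0) : EqOn f 0 (Ici a) := by
  have hanti : AntitoneOn f (Ici a) := antitoneOn_of_hasDerivAt_nonpos (convex_Ici a) hf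
    fun t ht => by linarith [hric t ht, div_nonneg (sq_nonneg (f t)) hc.le]
  intro t ht
  show f t = 0
  have hle : f t ≤ 0 := (hanti self_mem_Ici ht ht).trans ha
  refine le_antisymm hle (not_lt.mp fun hneg => ?_)
  have hsub : Ici t ⊆ Ici a := Ici_subset_Ici.mpr ht
  obtain ⟨s, hs, hfs⟩ := exists_nonneg_of_riccati hc (fun s hs => hf s (hsub hs))
    (fun s hs => hric s (hsub hs))
  linarith [hanti ht (hsub hs) hs]

end Riccati

theorem raychaudhuri_vanishing_general (n : ℕ) (hn : 3 ≤ n) (θ θ' : ℝ → ℝ)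
    (hderiv : ∀ t ∈ Set.Ici (0:ℝ), HasDerivAt θ (θ' t) t)
    (hineq : ∀ t ∈ Set.Ici (0:ℝ), θ' t + θ t ^ 2 / ((n : ℝ) - 2) ≤ 0)
    (h0 : θ 0 ≤ 0) :
    ∀ t ∈ Set.Ici (0:ℝ), θ t = 0 := by
  have hc : (0 : ℝ) < n - 2 := by
    have : (3 : ℝ) ≤ n := by exact_mod_cast hn
    linarith
  exact eqOn_zero_of_riccati hc hderiv hineq h0

/-- If `θ` is C¹ on `[0, ∞)` with `θ' + θ²/(n-2) ≤ 0` (n ≥ 3) and `θ 0 ≤ 0`,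
then `θ ≡ 0` on `[0, ∞)`. -/
theorem raychaudhuri_vanishing (n : ℕ) (hn : 3 ≤ n) (θ θ' : ℝ → ℝ)
    (hderiv : ∀ t ∈ Set.Ici (0:ℝ), HasDerivAt θ (θ' t) t)
    (hcont : ContinuousOn θ' (Set.Ici 0))
    (hineq : ∀ t ∈ Set.Ici (0:ℝ), θ' t + θ t ^ 2 / ((n : ℝ) - 2) ≤ 0)
    (h0 : θ 0 ≤ 0) :
    ∀ t ∈ Set.Ici (0:ℝ), θ t = 0 :=
  raychaudhuri_vanishing_general n hn θ θ' hderiv hineq h0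
end

section
/- Let n ≥ 3, let θ : [0, ∞) → ℝ be continuously differentiable, and let f : [0, ∞) → ℝ be continuous with f ≤ 0 everywhere. If θ'(t) + θ(t)²/(n−2) = f(t) for all t ≥ 0 and θ(0) ≤ 0, then θ ≡ 0, f ≡ 0, and θ(0) = 0. -/
/-!
Since `f ≤ 0`, the equation gives the Riccati inequality `θ' ≤ -θ²/(n-2)`, so `θ` is nonincreasing
and hence `θ ≤ θ 0 ≤ 0`. If `θ t₀ < 0` for some `t₀`, then `θ < 0` from `t₀` on and
`(1/θ)' = -θ'/θ² ≥ 1/(n-2)`, so the negative function `1/θ` would reach `0` by time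
`t₀ - (n-2)/θ t₀`: the solution blows up in finite time. Hence `θ ≡ 0`, so `θ' ≡ 0` and `f ≡ 0`.
-/

open Set

section RiccatiInequality

variable {a : ℝ} {u u' : ℝ → ℝ}

lemma antitoneOn_Ici_of_hasDerivAt_nonpos (hu : ∀ t ∈ Ici a, HasDerivAt u (u' t) t)
    (hu' : ∀ t ∈ Ici a, u' t ≤ 0) : AntitoneOn u (Ici a) := by
  refine antitoneOn_of_hasDerivWithinAt_nonpos (f' := u') (convex_Ici a)
    (fun t ht ↦ (hu t ht).continuousAt.continuousWithinAt) (fun t ht ↦ ?_) (fun t ht ↦ ?_)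
  · exact (hu t (interior_subset ht)).hasDerivWithinAt
  · exact hu' t (interior_subset ht)

lemma mul_sub_le_sub_of_hasDerivAt_Ici {C : ℝ} (hu : ∀ t ∈ Ici a, HasDerivAt u (u' t) t)
    (hu' : ∀ t ∈ Ici a, C ≤ u' t) {t : ℝ} (ht : a ≤ t) : C * (t - a) ≤ u t - u a := by
  refine (convex_Ici a).mul_sub_le_image_sub_of_le_deriv
    (fun t ht ↦ (hu t ht).continuousAt.continuousWithinAt)
    (fun t ht ↦ (hu t (interior_subset ht)).differentiableAt.differentiableWithinAt)
    (fun t ht ↦ ?_) a self_mem_Ici t ht ht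
  rw [(hu t (interior_subset ht)).deriv]
  exact hu' t (interior_subset ht)

lemma antitoneOn_Ici_of_hasDerivAt_le_neg_mul_sq {k : ℝ} (hk : 0 ≤ k)
    (hu : ∀ t ∈ Ici a, HasDerivAt u (u' t) t) (hu' : ∀ t ∈ Ici a, u' t ≤ -(k * u t ^ 2)) :
    AntitoneOn u (Ici a) :=
  antitoneOn_Ici_of_hasDerivAt_nonpos hu fun t ht ↦
    (hu' t ht).trans (neg_nonpos.2 (mul_nonneg hk (sq_nonneg _)))

lemma nonneg_of_hasDerivAt_le_neg_mul_sq {k : ℝ} (hk : 0 < k)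
    (hu : ∀ t ∈ Ici a, HasDerivAt u (u' t) t) (hu' : ∀ t ∈ Ici a, u' t ≤ -(k * u t ^ 2)) :
    0 ≤ u a := by
  by_contra! ha
  have hneg : ∀ t ∈ Ici a, u t < 0 := fun t ht ↦
    (antitoneOn_Ici_of_hasDerivAt_le_neg_mul_sq hk.le hu hu' self_mem_Ici ht ht).trans_lt ha
  have hinv : ∀ t ∈ Ici a, HasDerivAt (fun s ↦ (u s)⁻¹) (-u' t / u t ^ 2) t := fun t ht ↦
    (hu t ht).inv (hneg t ht).ne
  have hinv' : ∀ t ∈ Ici a, k ≤ -u' t / u t ^ 2 := fun t ht ↦ by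
    rw [le_div_iff₀ (sq_pos_of_neg (hneg t ht))]
    linarith [hu' t ht]
  set T := a - (k * u a)⁻¹
  have hT : a ≤ T := by
    have : (k * u a)⁻¹ < 0 := inv_lt_zero.2 (mul_neg_of_pos_of_neg hk ha)
    linarith
  have hgrowth := mul_sub_le_sub_of_hasDerivAt_Ici hinv hinv' hT
  have hkT : k * (T - a) = -(u a)⁻¹ := by
    simp only [T, mul_inv, sub_sub_cancel_left]
    field_simp
  have := inv_lt_zero.2 (hneg T hT)
  linarith

lemma HasDerivAt.eq_zero_of_eqOn_Ici {d t : ℝ} (hu : HasDerivAt u d t) (hzero : EqOn u 0 (Ici a))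
    (ht : t ∈ Ici a) : d = 0 :=
  (uniqueDiffOn_Ici a t ht).eq_deriv _ hu.hasDerivWithinAt
    ((hasDerivWithinAt_const t _ 0).congr hzero (hzero ht))

end RiccatiInequality

theorem raychaudhuri_rigidity_general (n : ℕ) (hn : 3 ≤ n) (θ θ' f : ℝ → ℝ)
    (hderiv : ∀ t ∈ Set.Ici (0:ℝ), HasDerivAt θ (θ' t) t)
    (hfnonpos : ∀ t ∈ Set.Ici (0:ℝ), f t ≤ 0)
    (heq : ∀ t ∈ Set.Ici (0:ℝ), θ' t + θ t ^ 2 / ((n : ℝ) - 2) = f t)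
    (h0 : θ 0 ≤ 0) :
    (∀ t ∈ Set.Ici (0:ℝ), θ t = 0) ∧ (∀ t ∈ Set.Ici (0:ℝ), f t = 0) ∧ θ 0 = 0 := by
  have hk : 0 < ((n : ℝ) - 2)⁻¹ := by
    have : (3 : ℝ) ≤ n := by exact_mod_cast hn
    exact inv_pos.2 (by linarith)
  have hriccati : ∀ t ∈ Ici (0:ℝ), θ' t ≤ -(((n : ℝ) - 2)⁻¹ * θ t ^ 2) := fun t ht ↦ by
    linarith [heq t ht, hfnonpos t ht, div_eq_inv_mul (θ t ^ 2) ((n : ℝ) - 2)]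
  have hanti := antitoneOn_Ici_of_hasDerivAt_le_neg_mul_sq hk.le hderiv hriccati
  have hθ : ∀ t ∈ Ici (0:ℝ), θ t = 0 := fun t ht ↦ by
    refine le_antisymm ((hanti self_mem_Ici ht ht).trans h0) ?_
    exact nonneg_of_hasDerivAt_le_neg_mul_sq hk (fun s hs ↦ hderiv s (Ici_subset_Ici.2 ht hs))
      (fun s hs ↦ hriccati s (Ici_subset_Ici.2 ht hs))
  have hθ' : ∀ t ∈ Ici (0:ℝ), θ' t = 0 := fun t ht ↦ (hderiv t ht).eq_zero_of_eqOn_Ici hθ ht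
  refine ⟨hθ, fun t ht ↦ ?_, hθ 0 self_mem_Ici⟩
  rw [← heq t ht, hθ t ht, hθ' t ht]
  simp

/-- Raychaudhuri rigidity: if `θ` is C¹ on `[0,∞)`, `f` continuous and nonpositive on `[0,∞)`,
`θ' + θ²/(n-2) = f` with `n ≥ 3` and `θ 0 ≤ 0`, then `θ ≡ 0`, `f ≡ 0` and `θ 0 = 0`. -/
theorem raychaudhuri_rigidity (n : ℕ) (hn : 3 ≤ n) (θ θ' f : ℝ → ℝ)
    (hderiv : ∀ t ∈ Set.Ici (0:ℝ), HasDerivAt θ (θ' t) t)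
    (hcont : ContinuousOn θ' (Set.Ici 0))
    (hf : ContinuousOn f (Set.Ici 0))
    (hfnonpos : ∀ t ∈ Set.Ici (0:ℝ), f t ≤ 0)
    (heq : ∀ t ∈ Set.Ici (0:ℝ), θ' t + θ t ^ 2 / ((n : ℝ) - 2) = f t)
    (h0 : θ 0 ≤ 0) :
    (∀ t ∈ Set.Ici (0:ℝ), θ t = 0) ∧ (∀ t ∈ Set.Ici (0:ℝ), f t = 0) ∧ θ 0 = 0 :=
  raychaudhuri_rigidity_general n hn θ θ' f hderiv hfnonpos heq h0
end
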